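/- Let A be a noetherian ring complete with respect to an ideal I, S a profinite set, and J ⊆ C(S,A) a closed ideal defining a closed formal subscheme of Spf C(S,A). Suppose every fiber ideal J_s := {f(s) : f ∈ J} ⊆ A is open in the I-adic topology (i.e., each fiber is a scheme). Then for every s ∈ S there is an open neighborhood U of s in S such that J_s ⊆ J_{s'} for all s' ∈ U. -/

import Mathlib

/-!
Since `A` is noetherian, `J_s` is generated by finitely many `f₁(s), …, f_r(s)` with `fᵢ ∈ J`.
By continuity, near `s` each `fᵢ(s')` is congruent to `fᵢ(s)` modulo `I^(n+1)`, where `I^n ⊆ J_s`;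
hence `I^n ⊆ J_s ⊆ J_{s'} + I^(n+1)`. Iterating gives `I^n ⊆ J_{s'} + I^(n+k)` for every `k`,
and openness of `J_{s'}` then forces `I^n ⊆ J_{s'}`, so `J_s ⊆ J_{s'}`.
-/

/-- Evaluation at a point, as a ring homomorphism `C(S,A) →+* A`. -/
def cEvalHom (S : Type*) [TopologicalSpace S]
    (A : Type*) [CommRing A] [TopologicalSpace A] [IsTopologicalRing A] (s : S) :
    C(S, A) →+* A where
  toFun f := f s
  map_one' := rfl
  map_mul' _ _ := rfl
  map_zero' := rfl
  map_add' _ _ := rfl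

open Filter Topology

namespace Ideal

variable {R : Type*} [CommRing R] {I J : Ideal R} {n : ℕ}

theorem pow_le_sup_pow_add (h : I ^ n ≤ J ⊔ I ^ (n + 1)) (k : ℕ) :
    I ^ n ≤ J ⊔ I ^ (n + k) := by
  induction k with
  | zero => exact le_sup_right
  | succ k ih =>
    have hstep : I ^ (n + k) ≤ J ⊔ I ^ (n + (k + 1)) :=
      calc I ^ (n + k) = I ^ k * I ^ n := by ring
        _ ≤ I ^ k * (J ⊔ I ^ (n + 1)) := mul_mono_right h
        _ = I ^ k * J ⊔ I ^ (n + (k + 1)) := by rw [mul_sup]; ring_nf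
        _ ≤ J ⊔ I ^ (n + (k + 1)) := sup_le_sup_right mul_le_right _
    exact ih.trans (sup_le le_sup_left hstep)

theorem pow_le_of_le_sup_pow_succ {m : ℕ} (h : I ^ n ≤ J ⊔ I ^ (n + 1)) (hm : I ^ m ≤ J) :
    I ^ n ≤ J :=
  (pow_le_sup_pow_add h m).trans
    (sup_le le_rfl ((pow_le_pow_right (Nat.le_add_left m n)).trans hm))

end Ideal

section FiberIdeals

variable {S : Type*} [TopologicalSpace S] {A : Type*} [CommRing A] [TopologicalSpace A]
  [IsTopologicalRing A] {J : Ideal C(S, A)} {K : Ideal A} {s : S}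

theorem eventually_mem_map_cEvalHom_sup {a : A} (ha : a ∈ J.map (cEvalHom S A s))
    (hK : IsOpen (K : Set A)) : ∀ᶠ s' in 𝓝 s, a ∈ J.map (cEvalHom S A s') ⊔ K := by
  obtain ⟨f, hfJ, rfl⟩ := (Ideal.mem_map_iff_of_surjective _
    fun b => ⟨ContinuousMap.const S b, rfl⟩).mp ha
  have hclose : ∀ᶠ s' in 𝓝 s, f s' - f s ∈ K :=
    ((f.continuous.sub continuous_const).tendsto s).eventually
      (hK.mem_nhds (by simp))
  filter_upwards [hclose] with s' hs'
  rw [show cEvalHom S A s f = f s' - (f s' - f s) from (sub_sub_cancel _ _).symm]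
  exact Submodule.sub_mem _ (Submodule.mem_sup_left (Ideal.mem_map_of_mem _ hfJ))
    (Submodule.mem_sup_right hs')

theorem eventually_le_map_cEvalHom_sup {L : Ideal A} (hL : L.FG)
    (hLJ : L ≤ J.map (cEvalHom S A s)) (hK : IsOpen (K : Set A)) :
    ∀ᶠ s' in 𝓝 s, L ≤ J.map (cEvalHom S A s') ⊔ K := by
  obtain ⟨T, rfl⟩ := hL
  simp only [Ideal.span_le] at hLJ ⊢
  exact (eventually_all_finset T).2 fun a ha =>
    eventually_mem_map_cEvalHom_sup (hLJ ha) hK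

end FiberIdeals

theorem fiber_ideals_semicontinuous_general
    (A : Type*) [CommRing A] [IsNoetherianRing A] [TopologicalSpace A] [IsTopologicalRing A]
    (I : Ideal A) (hA : IsAdic I)
    (S : Type*) [TopologicalSpace S]
    (J : Ideal C(S, A))
    (hJopen : ∀ s : S, ∃ n : ℕ, I ^ n ≤ Ideal.map (cEvalHom S A s) J) :
    ∀ s : S, ∃ U : Set S, IsOpen U ∧ s ∈ U ∧
      ∀ s' ∈ U, Ideal.map (cEvalHom S A s) J ≤ Ideal.map (cEvalHom S A s') J := by
  intro s
  obtain ⟨n, hn⟩ := hJopen s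
  have hnear : ∀ᶠ s' in 𝓝 s,
      J.map (cEvalHom S A s) ≤ J.map (cEvalHom S A s') ⊔ I ^ (n + 1) :=
    eventually_le_map_cEvalHom_sup (IsNoetherian.noetherian _) le_rfl
      ((isAdic_iff.mp hA).1 (n + 1))
  obtain ⟨U, hU, hUopen, hsU⟩ := eventually_nhds_iff.mp hnear
  refine ⟨U, hUopen, hsU, fun s' hs' => ?_⟩
  obtain ⟨m, hm⟩ := hJopen s'
  have hIn : I ^ n ≤ J.map (cEvalHom S A s') :=
    Ideal.pow_le_of_le_sup_pow_succ (hn.trans (hU s' hs')) hm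
  exact (hU s' hs').trans
    (sup_le le_rfl ((Ideal.pow_le_pow_right n.le_succ).trans hIn))

/-- Let `A` be a noetherian ring complete with respect to an ideal `I` (with the `I`-adic
topology), `S` a profinite set, and `J ⊆ C(S,A)` a closed ideal (closedness expressed by
`J = ⋂ₙ (J + I^n·C(S,A))`).  Suppose every fiber ideal `J_s = {f(s) : f ∈ J}` is open in
the `I`-adic topology of `A`.  Then for every `s ∈ S` there is an open neighborhood `U` of
`s` such that `J_s ⊆ J_{s'}` for all `s' ∈ U`. -/
theorem fiber_ideals_semicontinuous
    (A : Type*) [CommRing A] [IsNoetherianRing A] [TopologicalSpace A] [IsTopologicalRing A]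
    (I : Ideal A) (hA : IsAdic I) [IsAdicComplete I A]
    (S : Type*) [TopologicalSpace S] [CompactSpace S] [T2Space S] [TotallyDisconnectedSpace S]
    (J : Ideal C(S, A))
    (hJclosed : ∀ g : C(S, A),
      (∀ n : ℕ, g ∈ J ⊔ Ideal.map (algebraMap A C(S, A)) (I ^ n)) → g ∈ J)
    (hJopen : ∀ s : S, ∃ n : ℕ, I ^ n ≤ Ideal.map (cEvalHom S A s) J) :
    ∀ s : S, ∃ U : Set S, IsOpen U ∧ s ∈ U ∧
      ∀ s' ∈ U, Ideal.map (cEvalHom S A s) J ≤ Ideal.map (cEvalHom S A s') J :=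
  fiber_ideals_semicontinuous_general A I hA S J hJopen
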